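/- arXiv:1106.1729 — 4 statements merged into one kernel-verified Lean document; each statement's English description precedes it below -/
import Mathlib

section
/- Hofer's Lemma: Let (X,d) be a metric space, f : X → [0,∞) a continuous function, x ∈ X a point, and δ > 0 a number. Assume that the closed ball of radius 2δ around x is complete (as a metric space with the induced metric). Then there exist a point ξ ∈ X and a number ε with 0 < ε ≤ δ such that d(x,ξ) < 2δ, sup over the open ball B_ε(ξ) of f is at most 2 f(ξ), and ε f(ξ) ≥ δ f(x). -/
/-!
Argue by contradiction. Starting from `x`, a point `p` with `2ⁿ f x ≤ f p` fails to be a valid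
centre for the radius `δ / 2ⁿ` (for which `δ f x ≤ ε f p` holds automatically), so some point
within `δ / 2ⁿ` of `p` has more than twice the value of `f`. Iterating gives a sequence whose
steps sum to less than `2δ`: it is Cauchy and stays in the complete ball, so it converges, while
`f` more than doubles along it, contradicting continuity.
-/

open Filter Metric

theorem exists_seq_of_forall_exists_succ {α : Type*} {P : ℕ → α → Prop} {R : ℕ → α → α → Prop}
    {a : α} (h₀ : P 0 a) (step : ∀ n p, P n p → ∃ q, P (n + 1) q ∧ R n p q) :
    ∃ u : ℕ → α, u 0 = a ∧ ∀ n, P n (u n) ∧ R n (u n) (u (n + 1)) := by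
  choose! next hnext using step
  let u : ℕ → α := fun n ↦ Nat.rec a next n
  have hP : ∀ n, P n (u n) := fun n ↦ Nat.rec h₀ (fun n ih ↦ (hnext n _ ih).1) n
  exact ⟨u, rfl, fun n ↦ ⟨hP n, (hnext n _ (hP n)).2⟩⟩

theorem tendsto_atTop_of_two_mul_lt {a : ℕ → ℝ} (h₀ : 0 ≤ a 0) (ha : ∀ n, 2 * a n < a (n + 1)) :
    Tendsto a atTop atTop := by
  rw [← tendsto_add_atTop_iff_nat 1]
  exact tendsto_atTop_of_geom_le (by linarith [ha 0]) one_lt_two fun n ↦ (ha (n + 1)).le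

theorem IsComplete.not_tendsto_atTop_comp {X : Type*} [UniformSpace X] {s : Set X}
    (hs : IsComplete s) {u : ℕ → X} (hus : ∀ n, u n ∈ s) (hu : CauchySeq u) {f : X → ℝ}
    (hf : Continuous f) : ¬ Tendsto (f ∘ u) atTop atTop := by
  obtain ⟨y, -, hy⟩ := cauchySeq_tendsto_of_isComplete hs hus hu
  exact not_tendsto_atTop_of_tendsto_nhds ((hf.tendsto y).comp hy)

section Hofer

variable {X : Type*} [PseudoMetricSpace X] (f : X → ℝ) (x : X) (δ : ℝ)

def IsHoferPair (ξ : X) (ε : ℝ) : Prop :=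
  0 < ε ∧ ε ≤ δ ∧ dist x ξ < 2 * δ ∧ (∀ y ∈ ball ξ ε, f y ≤ 2 * f ξ) ∧ δ * f x ≤ ε * f ξ

variable {f x δ}

-- At level `n` the slack `2 (δ / 2ⁿ) = ∑_{k ≥ n} δ / 2ᵏ` is reserved for all later steps.
theorem exists_doubling_step_of_not_isHoferPair (hδ : 0 < δ) {n : ℕ} {p : X}
    (hdist : dist x p + 2 * (δ / 2 ^ n) ≤ 2 * δ) (hfp : 2 ^ n * f x ≤ f p)
    (hp : ¬ IsHoferPair f x δ p (δ / 2 ^ n)) :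
    ∃ q, (dist x q + 2 * (δ / 2 ^ (n + 1)) ≤ 2 * δ ∧ 2 ^ (n + 1) * f x ≤ f q) ∧
      dist p q < δ / 2 ^ n ∧ 2 * f p < f q := by
  have hr : 0 < δ / 2 ^ n := by positivity
  have hradius : δ * f x ≤ δ / 2 ^ n * f p :=
    calc δ * f x = δ / 2 ^ n * (2 ^ n * f x) := by field_simp
      _ ≤ δ / 2 ^ n * f p := by gcongr
  have hball : ¬ ∀ y ∈ ball p (δ / 2 ^ n), f y ≤ 2 * f p := fun h ↦
    hp ⟨hr, div_le_self hδ.le (one_le_pow₀ one_le_two), by linarith, h, hradius⟩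
  push Not at hball
  obtain ⟨q, hq, hfq⟩ := hball
  rw [mem_ball, dist_comm] at hq
  have hhalf : 2 * (δ / 2 ^ (n + 1)) = δ / 2 ^ n := by rw [pow_succ]; field_simp
  refine ⟨q, ⟨?_, ?_⟩, hq, hfq⟩
  · linarith [dist_triangle x p q]
  · rw [pow_succ']; linarith

end Hofer

/-- **Hofer's Lemma.** Let `(X,d)` be a metric space, `f : X → [0,∞)` continuous,
`x ∈ X`, `δ > 0`. If the closed ball of radius `2δ` around `x` is complete, then
there are `ξ ∈ X` and `0 < ε ≤ δ` with `d(x,ξ) < 2δ`, `sup_{B_ε(ξ)} f ≤ 2 f(ξ)`,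
and `ε f(ξ) ≥ δ f(x)`. -/
theorem hofer_lemma {X : Type*} [MetricSpace X] (f : X → ℝ)
    (hf_cont : Continuous f) (hf_nonneg : ∀ y, 0 ≤ f y)
    (x : X) (δ : ℝ) (hδ : 0 < δ)
    (hcomplete : IsComplete (Metric.closedBall x (2 * δ))) :
    ∃ (ξ : X) (ε : ℝ), 0 < ε ∧ ε ≤ δ ∧ dist x ξ < 2 * δ ∧
      (∀ y ∈ Metric.ball ξ ε, f y ≤ 2 * f ξ) ∧ δ * f x ≤ ε * f ξ := by
  suffices ∃ ξ ε, IsHoferPair f x δ ξ ε from this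
  by_contra! H
  obtain ⟨u, -, hu⟩ := exists_seq_of_forall_exists_succ
    (P := fun n p ↦ dist x p + 2 * (δ / 2 ^ n) ≤ 2 * δ ∧ 2 ^ n * f x ≤ f p)
    (R := fun n p q ↦ dist p q < δ / 2 ^ n ∧ 2 * f p < f q) (a := x)
    (by simp) fun n p hp ↦ exists_doubling_step_of_not_isHoferPair hδ hp.1 hp.2 (H p _)
  have hcauchy : CauchySeq u :=
    cauchySeq_of_le_geometric_two (C := 2 * δ) fun n ↦ (hu n).2.1.le.trans_eq (by ring)
  have hmem : ∀ n, u n ∈ closedBall x (2 * δ) := fun n ↦ by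
    rw [mem_closedBall, dist_comm]; linarith [(hu n).1.1, div_pos hδ (pow_pos two_pos n)]
  exact hcomplete.not_tendsto_atTop_comp hmem hcauchy hf_cont
    (tendsto_atTop_of_two_mul_lt (hf_nonneg _) fun n ↦ (hu n).2.2)
end

section
/- Bound for a weighted tree: Let k ∈ ℕ ∪ {0}, let (T,E) be a finite tree, let α₁,…,α_k ∈ T be vertices (not necessarily distinct), let f : T → [0,∞) be a function, and let E₀ > 0 be a number. Assume that for every vertex α ∈ T, either f(α) ≥ E₀, or the number of vertices β ∈ T adjacent to α plus the number of indices i ∈ {1,…,k} with α_i = α is at least 3. Then the number of vertices of T satisfies #T ≤ (2 ∑_{α ∈ T} f(α))/E₀ + k. -/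
lemma walk_adj_end {V : Type*} {G : SimpleGraph V} {u v : V} (w : G.Walk u v)
    (h : u ≠ v) : ∃ x, G.Adj v x := by
  induction w with
  | nil => exact absurd rfl h
  | @cons a b c hadj p ih =>
    by_cases hbc : b = c
    · exact ⟨a, (hbc ▸ hadj).symm⟩
    · exact ih hbc

/-- **Bound for a weighted tree.** Let `(T,E)` be a finite tree, `α₁,…,α_k ∈ T`
vertices, `f : T → [0,∞)`, and `E₀ > 0`. If every vertex `α` satisfies
`f(α) ≥ E₀` or `deg(α) + #{i | αᵢ = α} ≥ 3`, then
`#T ≤ 2 (∑_{α ∈ T} f(α)) / E₀ + k`. -/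
theorem tree_bound {T : Type*} [Fintype T] [DecidableEq T]
    (G : SimpleGraph T) [DecidableRel G.Adj] (hG : G.IsTree)
    (k : ℕ) (α : Fin k → T) (f : T → ℝ) (hf : ∀ a, 0 ≤ f a)
    (E₀ : ℝ) (hE₀ : 0 < E₀)
    (h : ∀ a : T, E₀ ≤ f a ∨
      3 ≤ G.degree a + (Finset.univ.filter fun i => α i = a).card) :
    (Fintype.card T : ℝ) ≤ 2 * (∑ a, f a) / E₀ + k := by
  classical
  haveI : Nonempty T := hG.isConnected.nonempty
  set m : T → ℕ := fun a => (Finset.univ.filter fun i => α i = a).card with hm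
  set S : Finset T := Finset.univ.filter fun a => E₀ ≤ f a with hS
  -- sum of multiplicities is k
  have hsum_m : ∑ a, m a = k := by
    rw [hm]
    rw [← Finset.card_eq_sum_card_fiberwise (t := Finset.univ) (f := α)
      (fun x _ => Finset.mem_univ _)]
    simp
  -- the key real inequality: |S| * E₀ ≤ ∑ f
  have hSf : (S.card : ℝ) * E₀ ≤ ∑ a, f a := by
    calc (S.card : ℝ) * E₀ = ∑ _a ∈ S, E₀ := by
          rw [Finset.sum_const, nsmul_eq_mul]
      _ ≤ ∑ a ∈ S, f a := by
          apply Finset.sum_le_sum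
          intro a ha
          exact (Finset.mem_filter.mp ha).2
      _ ≤ ∑ a, f a := Finset.sum_le_sum_of_subset_of_nonneg
          (Finset.subset_univ _) (fun a _ _ => hf a)
  -- show the natural number inequality: card T ≤ 2 * |S| + k
  have hnat : Fintype.card T ≤ 2 * S.card + k := by
    rcases le_or_gt (Fintype.card T) 1 with hcard | hcard
    · -- at most one vertex
      rcases h (Classical.arbitrary T) with h1 | h2
      · have : 1 ≤ S.card := by
          refine Finset.card_pos.mpr ⟨Classical.arbitrary T, ?_⟩
          simp [hS, h1]
        omega
      · have hdeg0 : G.degree (Classical.arbitrary T) = 0 := by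
          by_contra hne
          obtain ⟨w, hw⟩ := (G.degree_pos_iff_exists_adj _).mp (Nat.pos_of_ne_zero hne)
          have : w ≠ Classical.arbitrary T := fun he => G.irrefl (he ▸ hw)
          have : 2 ≤ Fintype.card T := Fintype.one_lt_card_iff_nontrivial.mpr ⟨_, _, this⟩
          omega
        have hk : 3 ≤ m (Classical.arbitrary T) := by
          have := h2; rw [hdeg0] at this; simpa using this
        have hmk : m (Classical.arbitrary T) ≤ k := by
          rw [← hsum_m]
          exact Finset.single_le_sum (f := m) (fun a _ => Nat.zero_le _) (Finset.mem_univ _)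
        omega
    · -- at least two vertices: every vertex has degree ≥ 1
      have hdeg : ∀ a : T, 1 ≤ G.degree a := by
        intro a
        obtain ⟨b, hb⟩ := Fintype.exists_ne_of_one_lt_card hcard a
        obtain ⟨w⟩ := hG.isConnected.preconnected b a
        exact (G.degree_pos_iff_exists_adj a).mpr (walk_adj_end w hb)
      -- sum of degrees
      have hedges : ∑ a, G.degree a + 2 = 2 * Fintype.card T := by
        rw [G.sum_degrees_eq_twice_card_edges, ← hG.card_edgeFinset]
        ring
      -- pointwise lower bounds
      have hlow : S.card + 3 * Sᶜ.card ≤ ∑ a, (G.degree a + m a) := by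
        rw [← Finset.sum_add_sum_compl S]
        have h1 : S.card ≤ ∑ a ∈ S, (G.degree a + m a) := by
          calc S.card = ∑ _a ∈ S, 1 := by simp
            _ ≤ _ := Finset.sum_le_sum fun a _ => by
                have := hdeg a; omega
        have h2 : 3 * Sᶜ.card ≤ ∑ a ∈ Sᶜ, (G.degree a + m a) := by
          calc 3 * Sᶜ.card = ∑ _a ∈ Sᶜ, 3 := by rw [Finset.sum_const]; ring
            _ ≤ _ := Finset.sum_le_sum fun a ha => by
                rcases h a with h1 | h2
                · exfalso
                  have : a ∈ S := by simp [hS, h1]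
                  exact (Finset.mem_compl.mp ha) this
                · exact h2
        omega
      have htot : ∑ a, (G.degree a + m a) = ∑ a, G.degree a + k := by
        rw [Finset.sum_add_distrib, hsum_m]
      have hcompl : S.card + Sᶜ.card = Fintype.card T := by
        rw [Finset.card_compl]
        have := Finset.card_le_univ S
        omega
      omega
  -- conclude
  have h1 : (S.card : ℝ) ≤ (∑ a, f a) / E₀ := by
    rw [le_div_iff₀ hE₀]; exact hSf
  calc (Fintype.card T : ℝ) ≤ 2 * S.card + k := by
        exact_mod_cast hnat
    _ ≤ 2 * ((∑ a, f a) / E₀) + k := by linarith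
    _ = 2 * (∑ a, f a) / E₀ + k := by ring
end

section
/- Let x, y ∈ S² be points and let φ_ν be a sequence of Möbius transformations of the Riemann sphere S² that converges to the constant y uniformly on every compact subset of S² \ {x}. Then the sequence of inverse transformations φ_ν⁻¹ converges to the constant x uniformly on every compact subset of S² \ {y}. -/
open OnePoint Filter Topology

/-- A Möbius transformation of the Riemann sphere `S² = ℂ ∪ {∞}`: there are
`a b c d : ℂ` with `ad - bc ≠ 0` such that `φ(z) = (az+b)/(cz+d)` for `z ∈ ℂ` with
`cz+d ≠ 0`, `φ(z) = ∞` for `z ∈ ℂ` with `cz+d = 0`, `φ(∞) = a/c` if `c ≠ 0`, and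
`φ(∞) = ∞` if `c = 0`. -/
def IsMoebius (φ : OnePoint ℂ → OnePoint ℂ) : Prop :=
  ∃ a b c d : ℂ, a * d - b * c ≠ 0 ∧
    (∀ z : ℂ, c * z + d ≠ 0 → φ (z : OnePoint ℂ) = (((a * z + b) / (c * z + d) : ℂ) : OnePoint ℂ)) ∧
    (∀ z : ℂ, c * z + d = 0 → φ (z : OnePoint ℂ) = ∞) ∧
    (c ≠ 0 → φ ∞ = ((a / c : ℂ) : OnePoint ℂ)) ∧
    (c = 0 → φ ∞ = ∞)

/-- A sequence of maps `ψ_ν : S² → S²` converges to the constant `p ∈ S²` uniformly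
on every compact subset of an open set `U ⊆ S²` if for every compact `K ⊆ U` and
every open neighborhood `V` of `p` we have `ψ_ν(K) ⊆ V` for all sufficiently
large `ν`. -/
def ConvUnifOnCompacts (ψ : ℕ → OnePoint ℂ → OnePoint ℂ) (U : Set (OnePoint ℂ))
    (p : OnePoint ℂ) : Prop :=
  ∀ K : Set (OnePoint ℂ), K ⊆ U → IsCompact K →
    ∀ V : Set (OnePoint ℂ), IsOpen V → p ∈ V →
      ∃ N : ℕ, ∀ ν ≥ N, ∀ z ∈ K, ψ ν z ∈ V

/-- If a sequence `φ_ν` of Möbius transformations of `S²` converges to the constant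
`y` uniformly on every compact subset of `S² \ {x}`, then the sequence of inverse
transformations converges to the constant `x` uniformly on every compact subset of
`S² \ {y}`. -/
theorem moebius_inverse_convergence (φ ψ : ℕ → OnePoint ℂ → OnePoint ℂ)
    (hφ : ∀ ν, IsMoebius (φ ν))
    (hinv : ∀ ν, (∀ z, ψ ν (φ ν z) = z) ∧ (∀ z, φ ν (ψ ν z) = z))
    (x y : OnePoint ℂ)
    (hconv : ConvUnifOnCompacts φ {x}ᶜ y) :
    ConvUnifOnCompacts ψ {y}ᶜ x := by
  intro K hK hKc V hV hxV
  obtain ⟨N, hN⟩ := hconv Vᶜ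
    (fun z hz hzx => hz (Set.mem_singleton_iff.mp hzx ▸ hxV))
    hV.isClosed_compl.isCompact
    Kᶜ hKc.isClosed.isOpen_compl (fun hy => hK hy rfl)
  refine ⟨N, fun ν hν z hz => ?_⟩
  by_contra hzV
  have h := hN ν hν (ψ ν z) hzV
  rw [(hinv ν).2 z] at h
  exact h hz
end

section
/- Convergence criterion for Möbius transformations: Let φ_ν be a sequence of Möbius transformations of the Riemann sphere S² and let x, y ∈ S² be points. Suppose there exist convergent sequences x₁^ν, x₂^ν, y^ν ∈ S² such that x ≠ lim x₁^ν, lim x₁^ν ≠ lim x₂^ν, lim x₂^ν ≠ x, y ≠ lim y^ν, lim φ_ν(x₁^ν) = lim φ_ν(x₂^ν) = y, and lim φ_ν⁻¹(y^ν) = x. Then φ_ν converges to the constant y uniformly on every compact subset of S² \ {x}. -/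
open OnePoint Filter Topology

/-!
The squared chordal distance, written in homogeneous coordinates as
`|u₁v₂ - u₂v₁|² / (‖u‖² ‖v‖²)`, is multiplied by `C κ(p) κ(q)` under a Möbius map, so the
cross-ratio `chordSq p q · chordSq r s / (chordSq p s · chordSq r q)` is Möbius invariant.
Apply the (multiplied out) invariance to `z, x₁^ν, x₂^ν, φ_ν⁻¹(y^ν)` along any filter on which
`z → z₀ ≠ x` and `φ_ν z → w`. In the limit one side contains the factor `chordSq y y = 0`, the
other is `chordSq w y` times three nonzero factors, so `w = y`. As `S²` is compact, `φ_ν z → y`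
locally uniformly near every `z₀ ≠ x`, and compactness of `K` makes this uniform on `K`.
-/

open ComplexConjugate

lemma tendsto_cocompact_zero_of_norm_le_inv_norm {E F : Type*} [NormedAddCommGroup E]
    [ProperSpace E] [SeminormedAddGroup F] {f : E → F} (h : ∀ z, z ≠ 0 → ‖f z‖ ≤ ‖z‖⁻¹) :
    Tendsto f (cocompact E) (𝓝 0) :=
  squeeze_zero_norm'
    ((tendsto_norm_cocompact_atTop.eventually_gt_atTop 0).mono fun z hz => h z (norm_pos_iff.1 hz))
    (tendsto_inv_atTop_zero.comp tendsto_norm_cocompact_atTop)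

namespace RiemannSphere

def homCoords : OnePoint ℂ → ℂ × ℂ := OnePoint.rec (1, 0) fun z => (z, 1)

@[simp] lemma homCoords_infty : homCoords ∞ = (1, 0) := rfl

@[simp] lemma homCoords_coe (z : ℂ) : homCoords z = (z, 1) := rfl

lemma homCoords_ne_zero (p : OnePoint ℂ) : homCoords p ≠ 0 := by
  induction p using OnePoint.rec <;> simp [Prod.ext_iff]

def homNormSq (u : ℂ × ℂ) : ℝ := Complex.normSq u.1 + Complex.normSq u.2

lemma homNormSq_pos {u : ℂ × ℂ} (hu : u ≠ 0) : 0 < homNormSq u := by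
  have h : u.1 ≠ 0 ∨ u.2 ≠ 0 := by
    by_contra! h
    exact hu (Prod.ext h.1 h.2)
  rcases h with h | h
  · exact add_pos_of_pos_of_nonneg (Complex.normSq_pos.2 h) (Complex.normSq_nonneg _)
  · exact add_pos_of_nonneg_of_pos (Complex.normSq_nonneg _) (Complex.normSq_pos.2 h)

/-- A quarter of the squared chordal distance: on `ℂ` it is `|z - w|² / ((1 + |z|²)(1 + |w|²))`. -/
noncomputable def homChordSq (u v : ℂ × ℂ) : ℝ :=
  Complex.normSq (u.1 * v.2 - u.2 * v.1) / (homNormSq u * homNormSq v)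

lemma homChordSq_smul {l m : ℂ} (hl : l ≠ 0) (hm : m ≠ 0) (u v : ℂ × ℂ) :
    homChordSq (l • u) (m • v) = homChordSq u v := by
  have hcross :
      (l • u).1 * (m • v).2 - (l • u).2 * (m • v).1 = l * m * (u.1 * v.2 - u.2 * v.1) := by
    simp only [Prod.smul_fst, Prod.smul_snd, smul_eq_mul]; ring
  have hnorm (k : ℂ) (w : ℂ × ℂ) : homNormSq (k • w) = Complex.normSq k * homNormSq w := by
    simp only [homNormSq, Prod.smul_fst, Prod.smul_snd, smul_eq_mul, Complex.normSq_mul]; ring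
  have hlm : Complex.normSq l * Complex.normSq m ≠ 0 := by simp [hl, hm]
  rw [homChordSq, homChordSq, hcross, hnorm, hnorm, Complex.normSq_mul, Complex.normSq_mul,
    mul_mul_mul_comm]
  exact mul_div_mul_left _ _ hlm

def matAct (a b c d : ℂ) (u : ℂ × ℂ) : ℂ × ℂ := (a * u.1 + b * u.2, c * u.1 + d * u.2)

lemma homChordSq_matAct (a b c d : ℂ) {u v : ℂ × ℂ} (hu : u ≠ 0) (hv : v ≠ 0)
    (hMu : matAct a b c d u ≠ 0) (hMv : matAct a b c d v ≠ 0) :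
    homChordSq (matAct a b c d u) (matAct a b c d v) =
      Complex.normSq (a * d - b * c) * (homNormSq u / homNormSq (matAct a b c d u)) *
        (homNormSq v / homNormSq (matAct a b c d v)) * homChordSq u v := by
  have := (homNormSq_pos hu).ne'
  have := (homNormSq_pos hv).ne'
  have := (homNormSq_pos hMu).ne'
  have := (homNormSq_pos hMv).ne'
  have hcross : (matAct a b c d u).1 * (matAct a b c d v).2 -
      (matAct a b c d u).2 * (matAct a b c d v).1 = (a * d - b * c) * (u.1 * v.2 - u.2 * v.1) := by
    simp only [matAct]; ring
  rw [homChordSq, homChordSq, hcross, Complex.normSq_mul]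
  field_simp

noncomputable def chordSq (p q : OnePoint ℂ) : ℝ := homChordSq (homCoords p) (homCoords q)

lemma chordSq_eq_zero_iff {p q : OnePoint ℂ} : chordSq p q = 0 ↔ p = q := by
  have := (homNormSq_pos (homCoords_ne_zero p)).ne'
  have := (homNormSq_pos (homCoords_ne_zero q)).ne'
  rw [chordSq, homChordSq, div_eq_zero_iff, or_iff_left (by positivity), Complex.normSq_eq_zero,
    sub_eq_zero]
  induction p using OnePoint.rec <;> induction q using OnePoint.rec <;>
    simp [eq_comm]

lemma one_add_normSq_ne_zero (z : ℂ) : 1 + Complex.normSq z ≠ 0 :=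
  (add_pos_of_pos_of_nonneg one_pos (Complex.normSq_nonneg z)).ne'

/-- Up to affine changes of coordinates, `sphereWeight` and `sphereCoord` are the height and the
horizontal coordinates of the inverse stereographic projection; they make `chordSq` visibly
continuous at `∞`. -/
noncomputable def sphereWeight : C(OnePoint ℂ, ℝ) :=
  OnePoint.continuousMapMk ⟨fun z => (1 + Complex.normSq z)⁻¹,
    (by fun_prop : Continuous fun z => 1 + Complex.normSq z).inv₀ one_add_normSq_ne_zero⟩ 0 <| by
    rw [coclosedCompact_eq_cocompact]
    refine tendsto_cocompact_zero_of_norm_le_inv_norm fun z hz => ?_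
    have hr := norm_pos_iff.2 hz
    rw [ContinuousMap.coe_mk, Complex.normSq_eq_norm_sq, norm_inv,
      Real.norm_of_nonneg (by positivity)]
    exact inv_anti₀ hr (by nlinarith)

noncomputable def sphereCoord : C(OnePoint ℂ, ℂ) :=
  OnePoint.continuousMapMk ⟨fun z => (1 + Complex.normSq z)⁻¹ • z,
    ((by fun_prop : Continuous fun z => 1 + Complex.normSq z).inv₀ one_add_normSq_ne_zero).smul
      continuous_id⟩ 0 <| by
    rw [coclosedCompact_eq_cocompact]
    refine tendsto_cocompact_zero_of_norm_le_inv_norm fun z hz => ?_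
    have hr := norm_pos_iff.2 hz
    rw [ContinuousMap.coe_mk, Complex.normSq_eq_norm_sq, norm_smul, norm_inv,
      Real.norm_of_nonneg (by positivity), inv_mul_le_iff₀ (by positivity), le_mul_inv_iff₀ hr]
    nlinarith

@[simp] lemma sphereWeight_infty : sphereWeight ∞ = 0 := rfl
@[simp] lemma sphereWeight_coe (z : ℂ) : sphereWeight z = (1 + Complex.normSq z)⁻¹ := rfl
@[simp] lemma sphereCoord_infty : sphereCoord ∞ = 0 := rfl
@[simp] lemma sphereCoord_coe (z : ℂ) : sphereCoord z = (1 + Complex.normSq z)⁻¹ • z := rfl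

lemma chordSq_eq_sphere (p q : OnePoint ℂ) :
    chordSq p q = sphereWeight p + sphereWeight q - 2 * sphereWeight p * sphereWeight q -
      2 * (sphereCoord p * conj (sphereCoord q)).re := by
  induction p using OnePoint.rec <;> induction q using OnePoint.rec
  · simp [chordSq, homChordSq]
  · simp [chordSq, homChordSq, homNormSq, add_comm]
  · simp [chordSq, homChordSq, homNormSq, add_comm]
  · rename_i z w
    simp only [chordSq, homChordSq, homNormSq, homCoords_coe, sphereWeight_coe, sphereCoord_coe,
      mul_one, one_mul, Complex.normSq_one, Complex.normSq_sub, Complex.real_smul, map_mul,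
      Complex.conj_ofReal]
    rw [show ∀ t s : ℝ, (t * z * (s * conj w)).re = t * s * (z * conj w).re by
      intro t s
      rw [show (t : ℂ) * z * (s * conj w) = ((t * s : ℝ) : ℂ) * (z * conj w) by push_cast; ring,
        Complex.re_ofReal_mul]]
    rw [add_comm (Complex.normSq z) 1, add_comm (Complex.normSq w) 1]
    have := one_add_normSq_ne_zero z
    have := one_add_normSq_ne_zero w
    field_simp
    ring

lemma continuous_chordSq : Continuous fun pq : OnePoint ℂ × OnePoint ℂ => chordSq pq.1 pq.2 := by
  simp only [chordSq_eq_sphere]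
  fun_prop

lemma tendsto_chordSq {ι : Type*} {L : Filter ι} {f g : ι → OnePoint ℂ} {p q : OnePoint ℂ}
    (hf : Tendsto f L (𝓝 p)) (hg : Tendsto g L (𝓝 q)) :
    Tendsto (fun i => chordSq (f i) (g i)) L (𝓝 (chordSq p q)) :=
  (continuous_chordSq.tendsto (p, q)).comp (f := fun i => (f i, g i)) (hf.prodMk_nhds hg)

end RiemannSphere

open RiemannSphere

lemma IsMoebius.exists_homCoords_eq_smul {φ : OnePoint ℂ → OnePoint ℂ} (hφ : IsMoebius φ) :
    ∃ a b c d : ℂ, ∀ p, ∃ l : ℂ, l ≠ 0 ∧ homCoords (φ p) = l • matAct a b c d (homCoords p) := by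
  obtain ⟨a, b, c, d, hdet, hfin, hpole, hinf, hinf'⟩ := hφ
  refine ⟨a, b, c, d, fun p => ?_⟩
  induction p using OnePoint.rec with
  | infty =>
    by_cases hc : c = 0
    · have ha : a ≠ 0 := by rintro rfl; simp [hc] at hdet
      exact ⟨a⁻¹, inv_ne_zero ha, by simp [hinf' hc, matAct, hc, ha]⟩
    · exact ⟨c⁻¹, inv_ne_zero hc, by simp [hinf hc, matAct, hc, div_eq_inv_mul]⟩
  | coe z =>
    by_cases hz : c * z + d = 0
    · have haz : a * z + b ≠ 0 := by
        intro h
        apply hdet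
        linear_combination a * hz - c * h
      exact ⟨(a * z + b)⁻¹, inv_ne_zero haz, by simp [hpole z hz, matAct, hz, haz]⟩
    · refine ⟨(c * z + d)⁻¹, inv_ne_zero hz, ?_⟩
      simp [hfin z hz, matAct, hz, div_eq_inv_mul]

lemma IsMoebius.exists_chordSq_map_eq {φ : OnePoint ℂ → OnePoint ℂ} (hφ : IsMoebius φ) :
    ∃ (C : ℝ) (κ : OnePoint ℂ → ℝ), ∀ p q, chordSq (φ p) (φ q) = C * κ p * κ q * chordSq p q := by
  obtain ⟨a, b, c, d, hlift⟩ := hφ.exists_homCoords_eq_smul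
  have hM (p : OnePoint ℂ) : matAct a b c d (homCoords p) ≠ 0 := by
    obtain ⟨l, -, hp⟩ := hlift p
    intro h
    exact homCoords_ne_zero (φ p) (by rw [hp, h, smul_zero])
  refine ⟨Complex.normSq (a * d - b * c),
    fun p => homNormSq (homCoords p) / homNormSq (matAct a b c d (homCoords p)), fun p q => ?_⟩
  obtain ⟨l, hl, hp⟩ := hlift p
  obtain ⟨m, hm, hq⟩ := hlift q
  rw [chordSq, hp, hq, homChordSq_smul hl hm,
    homChordSq_matAct a b c d (homCoords_ne_zero p) (homCoords_ne_zero q) (hM p) (hM q), chordSq]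

lemma IsMoebius.chordSq_cross_ratio {φ : OnePoint ℂ → OnePoint ℂ} (hφ : IsMoebius φ)
    (p q r s : OnePoint ℂ) :
    chordSq (φ p) (φ q) * chordSq (φ r) (φ s) * chordSq p s * chordSq r q =
      chordSq p q * chordSq r s * chordSq (φ p) (φ s) * chordSq (φ r) (φ q) := by
  obtain ⟨C, κ, h⟩ := hφ.exists_chordSq_map_eq
  simp only [h]
  ring

theorem eq_of_tendsto_moebius {ι : Type*} {L : Filter ι} [L.NeBot]
    {φ : ι → OnePoint ℂ → OnePoint ℂ} (hφ : ∀ i, IsMoebius (φ i))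
    {x₁ x₂ u z : ι → OnePoint ℂ} {ℓ₁ ℓ₂ x y ℓy z₀ w : OnePoint ℂ}
    (hx₁ : Tendsto x₁ L (𝓝 ℓ₁)) (hx₂ : Tendsto x₂ L (𝓝 ℓ₂)) (hu : Tendsto u L (𝓝 x))
    (hz : Tendsto z L (𝓝 z₀))
    (hφx₁ : Tendsto (fun i => φ i (x₁ i)) L (𝓝 y)) (hφx₂ : Tendsto (fun i => φ i (x₂ i)) L (𝓝 y))
    (hφu : Tendsto (fun i => φ i (u i)) L (𝓝 ℓy)) (hφz : Tendsto (fun i => φ i (z i)) L (𝓝 w))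
    (hℓ : ℓ₁ ≠ ℓ₂) (hy : y ≠ ℓy) (hz₀ : z₀ ≠ x) :
    w = y := by
  have hlhs := (((tendsto_chordSq hφz hφx₁).mul (tendsto_chordSq hφx₂ hφu)).mul
    (tendsto_chordSq hz hu)).mul (tendsto_chordSq hx₂ hx₁)
  have hrhs := (((tendsto_chordSq hz hx₁).mul (tendsto_chordSq hx₂ hu)).mul
    (tendsto_chordSq hφz hφu)).mul (tendsto_chordSq hφx₂ hφx₁)
  have h0 : chordSq w y * chordSq y ℓy * chordSq z₀ x * chordSq ℓ₂ ℓ₁ = 0 := by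
    rw [tendsto_nhds_unique hlhs <| hrhs.congr fun i =>
      ((hφ i).chordSq_cross_ratio (z i) (x₁ i) (x₂ i) (u i)).symm, chordSq_eq_zero_iff.2 rfl,
      mul_zero]
  simpa [chordSq_eq_zero_iff, hy, hz₀, hℓ.symm] using h0

theorem tendsto_moebius_prod_nhds {ι : Type*} {l : Filter ι}
    {φ : ι → OnePoint ℂ → OnePoint ℂ} (hφ : ∀ i, IsMoebius (φ i))
    {x₁ x₂ u : ι → OnePoint ℂ} {ℓ₁ ℓ₂ x y ℓy z₀ : OnePoint ℂ}
    (hx₁ : Tendsto x₁ l (𝓝 ℓ₁)) (hx₂ : Tendsto x₂ l (𝓝 ℓ₂)) (hu : Tendsto u l (𝓝 x))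
    (hφx₁ : Tendsto (fun i => φ i (x₁ i)) l (𝓝 y)) (hφx₂ : Tendsto (fun i => φ i (x₂ i)) l (𝓝 y))
    (hφu : Tendsto (fun i => φ i (u i)) l (𝓝 ℓy))
    (hℓ : ℓ₁ ≠ ℓ₂) (hy : y ≠ ℓy) (hz₀ : z₀ ≠ x) :
    Tendsto (fun q : ι × OnePoint ℂ => φ q.1 q.2) (l ×ˢ 𝓝 z₀) (𝓝 y) := by
  refine tendsto_nhds_of_unique_mapClusterPt fun w hw => ?_
  set L := comap (fun q : ι × OnePoint ℂ => φ q.1 q.2) (𝓝 w) ⊓ l ×ˢ 𝓝 z₀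
  have : L.NeBot := neBot_inf_comap_iff_map'.2 hw
  have hfst : Tendsto Prod.fst L l := tendsto_fst.mono_left inf_le_right
  exact eq_of_tendsto_moebius (φ := fun q : ι × OnePoint ℂ => φ q.1) (fun q => hφ q.1)
    (hx₁.comp hfst) (hx₂.comp hfst) (hu.comp hfst) (tendsto_snd.mono_left inf_le_right)
    (hφx₁.comp hfst) (hφx₂.comp hfst) (hφu.comp hfst) (tendsto_comap.mono_left inf_le_left)
    hℓ hy hz₀

lemma convUnifOnCompacts_of_tendsto {ψ : ℕ → OnePoint ℂ → OnePoint ℂ} {U : Set (OnePoint ℂ)}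
    {p : OnePoint ℂ}
    (h : ∀ z ∈ U, Tendsto (fun q : ℕ × OnePoint ℂ => ψ q.1 q.2) (atTop ×ˢ 𝓝 z) (𝓝 p)) :
    ConvUnifOnCompacts ψ U p := by
  intro K hKU hK V hV hpV
  have hmem : {q : ℕ × OnePoint ℂ | ψ q.1 q.2 ∈ V} ∈ atTop ×ˢ 𝓝ˢ K :=
    hK.mem_prod_nhdsSet_of_forall fun z hz => h z (hKU hz) (hV.mem_nhds hpV)
  obtain ⟨A, hA, B, hB, hAB⟩ := mem_prod_iff.1 hmem
  obtain ⟨N, hN⟩ := mem_atTop_sets.1 hA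
  exact ⟨N, fun ν hν z hz => hAB (Set.mk_mem_prod (hN ν hν) (subset_of_mem_nhdsSet hB hz))⟩

theorem moebius_convergence_criterion_general (φ ψ : ℕ → OnePoint ℂ → OnePoint ℂ)
    (hφ : ∀ ν, IsMoebius (φ ν))
    (hinv : ∀ ν, (∀ z, ψ ν (φ ν z) = z) ∧ (∀ z, φ ν (ψ ν z) = z))
    (x y : OnePoint ℂ)
    (x₁ x₂ yseq : ℕ → OnePoint ℂ) (ℓ₁ ℓ₂ ℓy : OnePoint ℂ)
    (hx₁ : Tendsto x₁ atTop (𝓝 ℓ₁)) (hx₂ : Tendsto x₂ atTop (𝓝 ℓ₂))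
    (hy : Tendsto yseq atTop (𝓝 ℓy))
    (hne₂ : ℓ₁ ≠ ℓ₂) (hney : y ≠ ℓy)
    (hφx₁ : Tendsto (fun ν => φ ν (x₁ ν)) atTop (𝓝 y))
    (hφx₂ : Tendsto (fun ν => φ ν (x₂ ν)) atTop (𝓝 y))
    (hψy : Tendsto (fun ν => ψ ν (yseq ν)) atTop (𝓝 x)) :
    ConvUnifOnCompacts φ {x}ᶜ y :=
  have hφψy : Tendsto (fun ν => φ ν (ψ ν (yseq ν))) atTop (𝓝 ℓy) :=
    hy.congr fun ν => ((hinv ν).2 (yseq ν)).symm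
  convUnifOnCompacts_of_tendsto fun _ hz₀ =>
    tendsto_moebius_prod_nhds hφ hx₁ hx₂ hψy hφx₁ hφx₂ hφψy hne₂ hney hz₀

/-- **Convergence criterion for Möbius transformations.** Let `φ_ν` be a sequence of
Möbius transformations of `S²` (with inverses `ψ_ν`) and `x, y ∈ S²`. Suppose there
are convergent sequences `x₁^ν, x₂^ν, y^ν ∈ S²` with `x ≠ lim x₁^ν`,
`lim x₁^ν ≠ lim x₂^ν`, `lim x₂^ν ≠ x`, `y ≠ lim y^ν`,
`lim φ_ν(x₁^ν) = lim φ_ν(x₂^ν) = y`, and `lim φ_ν⁻¹(y^ν) = x`. Then `φ_ν`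
converges to the constant `y` uniformly on every compact subset of `S² \ {x}`. -/
theorem moebius_convergence_criterion (φ ψ : ℕ → OnePoint ℂ → OnePoint ℂ)
    (hφ : ∀ ν, IsMoebius (φ ν))
    (hinv : ∀ ν, (∀ z, ψ ν (φ ν z) = z) ∧ (∀ z, φ ν (ψ ν z) = z))
    (x y : OnePoint ℂ)
    (x₁ x₂ yseq : ℕ → OnePoint ℂ) (ℓ₁ ℓ₂ ℓy : OnePoint ℂ)
    (hx₁ : Tendsto x₁ atTop (𝓝 ℓ₁)) (hx₂ : Tendsto x₂ atTop (𝓝 ℓ₂))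
    (hy : Tendsto yseq atTop (𝓝 ℓy))
    (hne₁ : x ≠ ℓ₁) (hne₂ : ℓ₁ ≠ ℓ₂) (hne₃ : ℓ₂ ≠ x) (hney : y ≠ ℓy)
    (hφx₁ : Tendsto (fun ν => φ ν (x₁ ν)) atTop (𝓝 y))
    (hφx₂ : Tendsto (fun ν => φ ν (x₂ ν)) atTop (𝓝 y))
    (hψy : Tendsto (fun ν => ψ ν (yseq ν)) atTop (𝓝 x)) :
    ConvUnifOnCompacts φ {x}ᶜ y :=
  moebius_convergence_criterion_general φ ψ hφ hinv x y x₁ x₂ yseq ℓ₁ ℓ₂ ℓy hx₁ hx₂ hy hne₂ hney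
    hφx₁ hφx₂ hψy
end
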